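/- For every real number α ≥ 0, on the Lie algebra A_{5,17}^{α,-α,1}⊕ℝ with structure equations (αe^{15}+e^{25}, -e^{15}+αe^{25}, -αe^{35}+e^{45}, -e^{35}-αe^{45}, 0, 0), the pair F = e^{13} + e^{24} + e^{56} and ρ = e^{125} - e^{146} + e^{236} - e^{345} satisfies dF = 0, dρ = 0, F^3 ≠ 0, and F∧ρ = 0. -/

import Mathlib

open ExteriorAlgebra

noncomputable section

/-- The exterior algebra Λ*(g*) of a 6-dimensional real Lie algebra g,
    identified with the exterior algebra on ℝ^6. -/
abbrev E6 : Type := ExteriorAlgebra ℝ (Fin 6 → ℝ)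

/-- The basis 1-forms e^1, ..., e^6 (0-indexed). -/
def e (i : Fin 6) : E6 := ι ℝ (Pi.single i 1)

/-- Structure equations of A_{5,17}^{α,-α,1} ⊕ ℝ, depending on the parameter α. -/
def d1 (α : ℝ) : Fin 6 → E6 :=
  ![α • (e 0 * e 4) + e 1 * e 4,
    -(e 0 * e 4) + α • (e 1 * e 4),
    -α • (e 2 * e 4) + e 3 * e 4,
    -(e 2 * e 4) - α • (e 3 * e 4),
    0, 0]

/-- Leibniz rule for 2-forms. -/
def d2 (α : ℝ) (i j : Fin 6) : E6 := d1 α i * e j - e i * d1 α j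

/-- Leibniz rule for 3-forms. -/
def d3 (α : ℝ) (i j k : Fin 6) : E6 :=
  d1 α i * e j * e k - e i * d1 α j * e k + e i * e j * d1 α k

/-- F = e^{13} + e^{24} + e^{56}. -/
def F : E6 := e 0 * e 2 + e 1 * e 3 + e 4 * e 5

/-- dF via the Leibniz rule. -/
def dF (α : ℝ) : E6 := d2 α 0 2 + d2 α 1 3 + d2 α 4 5

/-- ρ = e^{125} - e^{146} + e^{236} - e^{345}. -/
def ρ : E6 := e 0 * e 1 * e 4 - e 0 * e 3 * e 5 + e 1 * e 2 * e 5 - e 2 * e 3 * e 4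

/-- dρ via the Leibniz rule. -/
def dρ (α : ℝ) : E6 := d3 α 0 1 4 - d3 α 0 3 5 + d3 α 1 2 5 - d3 α 2 3 4

/-! The three vanishing statements are finite computations: expand, sort every monomial in
`e 0, …, e 5` with `e i * e i = 0` and `e i * e j = -(e j * e i)`, and collect coefficients.
Likewise `F * F * F = -6 • e 0 ⋯ e 5`, and this top form is nonzero because the determinant of
the standard basis, extended to the exterior algebra, takes the value `1` on it. -/

theorem ExteriorAlgebra.ιMulti_basis_ne_zero {R M : Type*} [CommRing R] [Nontrivial R]
    [AddCommGroup M] [Module R M] {n : ℕ} (b : Module.Basis (Fin n) R M) :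
    ιMulti R n b ≠ 0 := by
  intro h
  have := congrArg (liftAlternating (R := R) (M := M) (N := R)
    (Pi.single (M := fun i => M [⋀^Fin i]→ₗ[R] R) n b.det)) h
  rw [liftAlternating_apply_ιMulti, Pi.single_eq_same, Module.Basis.det_self, map_zero] at this
  exact one_ne_zero this

lemma e_mul_self (i : Fin 6) : e i * e i = 0 := ι_sq_zero _

lemma e_mul_self_mul (i : Fin 6) (x : E6) : e i * (e i * x) = 0 := by
  rw [← mul_assoc, e_mul_self, zero_mul]

-- The hypothesis `j < i` orients the anticommutation rule so that `simp` terminates on it.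
lemma e_mul_e_of_lt {i j : Fin 6} (_ : j < i) : e i * e j = -(e j * e i) :=
  eq_neg_of_add_eq_zero_left (ι_add_mul_swap _ _)

lemma e_mul_e_mul_of_lt {i j : Fin 6} (x : E6) (h : j < i) :
    e i * (e j * x) = -(e j * (e i * x)) := by
  rw [← mul_assoc, e_mul_e_of_lt h, neg_mul, mul_assoc]

lemma dF_eq_zero (α : ℝ) : dF α = 0 := by
  simp (disch := decide) only [dF, d2, d1, Matrix.cons_val, mul_assoc, add_mul, neg_mul,
    mul_add, mul_sub, mul_neg, smul_mul_assoc, mul_smul_comm, mul_zero, zero_mul,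
    e_mul_e_of_lt, neg_neg, smul_neg]
  module

lemma dρ_eq_zero (α : ℝ) : dρ α = 0 := by
  simp (disch := decide) only [dρ, d3, d1, Matrix.cons_val, mul_assoc, add_mul, sub_mul, neg_mul,
    mul_add, mul_sub, mul_neg, smul_mul_assoc, mul_smul_comm, mul_zero, zero_mul, e_mul_self,
    e_mul_self_mul, e_mul_e_of_lt, neg_neg, smul_neg]
  module

lemma F_mul_ρ : F * ρ = 0 := by
  simp (disch := decide) only [F, ρ, mul_assoc, add_mul, mul_add, mul_sub, mul_neg, mul_zero,
    e_mul_self, e_mul_self_mul, e_mul_e_of_lt, e_mul_e_mul_of_lt, neg_neg, neg_zero]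
  abel

lemma F_mul_F_mul_F : F * F * F = -(6 : ℝ) • (e 0 * (e 1 * (e 2 * (e 3 * (e 4 * e 5))))) := by
  simp (disch := decide) only [F, mul_assoc, add_mul, neg_mul, mul_add, mul_neg,
    mul_zero, zero_mul, e_mul_self, e_mul_self_mul, e_mul_e_of_lt, e_mul_e_mul_of_lt,
    neg_neg, neg_zero]
  module

lemma ιMulti_basisFun :
    ιMulti ℝ 6 (Pi.basisFun ℝ (Fin 6)) = e 0 * (e 1 * (e 2 * (e 3 * (e 4 * e 5)))) := by
  simp [ιMulti_apply, e, Matrix.vecTail]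

/-- For every α ≥ 0, (F, ρ) is a symplectic half-flat pair on A_{5,17}^{α,-α,1} ⊕ ℝ. -/
theorem stmt9 : ∀ α : ℝ, 0 ≤ α →
    dF α = 0 ∧ dρ α = 0 ∧ F * F * F ≠ 0 ∧ F * ρ = 0 := by
  intro α _
  refine ⟨dF_eq_zero α, dρ_eq_zero α, ?_, F_mul_ρ⟩
  rw [F_mul_F_mul_F, ← ιMulti_basisFun]
  exact smul_ne_zero (by norm_num) (ιMulti_basis_ne_zero _)
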